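/- Let q = 2 and h_ss be a non-constant C⁴ X-periodic positive solution of h_ss''' + B h_ss h_ss' = 0 with B > 0. Then the third variation of the energy in the direction u = −h_ss'' satisfies B ∫₀^X (h_ss'')³ dx = −(2/3) B² ∫₀^X (h_ss')⁴ dx < 0. -/

import Mathlib

open Set intervalIntegral

lemma periodic_deriv' (f : ℝ → ℝ) (c : ℝ) (h : Function.Periodic f c) :
    Function.Periodic (deriv f) c := by
  intro x
  have hfun : (fun y => f (y + c)) = f := funext h
  calc deriv f (x + c) = deriv (fun y => f (y + c)) x := (deriv_comp_add_const f c x).symm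
    _ = deriv f x := by rw [hfun]

/-- For q = 2 (so r(y) = B y), the third variation of the energy in
the direction u = -h_ss'' equals B ∫ (h_ss'')³ = -(2/3) B² ∫ (h_ss')⁴ < 0. -/
theorem third_variation_q_two
    (X : ℝ) (hX : 0 < X)
    (B : ℝ) (hB : 0 < B)
    (hss : ℝ → ℝ)
    (hss_smooth : ContDiff ℝ 6 hss)
    (hss_per : Function.Periodic hss X)
    (hss_pos : ∀ x, 0 < hss x)
    (hss_nonconst : ∃ x y, hss x ≠ hss y)
    (hss_ode : ∀ x, deriv (deriv (deriv hss)) x = -B * hss x * deriv hss x) :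
    (B * ∫ x in (0:ℝ)..X, (deriv (deriv hss) x) ^ 3
        = -(2/3) * B ^ 2 * ∫ x in (0:ℝ)..X, (deriv hss x) ^ 4) ∧
    (B * ∫ x in (0:ℝ)..X, (deriv (deriv hss) x) ^ 3 < 0) := by
  set h1 := deriv hss with hh1
  set h2 := deriv h1 with hh2
  -- smoothness of derivatives
  have hsm1 : ContDiff ℝ 5 h1 :=
    ((contDiff_succ_iff_deriv (n := 5)).mp (hss_smooth.of_le (by norm_num))).2.2
  have hsm2 : ContDiff ℝ 4 h2 :=
    ((contDiff_succ_iff_deriv (n := 4)).mp (hsm1.of_le (by norm_num))).2.2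
  have hdiff0 : Differentiable ℝ hss := hss_smooth.differentiable (by norm_num)
  have hdiff1 : Differentiable ℝ h1 := hsm1.differentiable (by norm_num)
  have hdiff2 : Differentiable ℝ h2 := hsm2.differentiable (by norm_num)
  have hc1 : Continuous h1 := hsm1.continuous
  have hc2 : Continuous h2 := hsm2.continuous
  -- periodicity of derivatives
  have hp1 : Function.Periodic h1 X := periodic_deriv' hss X hss_per
  have hp2 : Function.Periodic h2 X := periodic_deriv' h1 X hp1
  -- the potential F with F' = h2^3 + (2/3) B h1^4
  set F : ℝ → ℝ := fun x => (h2 x) ^ 2 * h1 x + (2/3) * B * hss x * (h1 x) ^ 3 with hF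
  have hFderiv : ∀ x, HasDerivAt F ((h2 x) ^ 3 + (2/3) * B * (h1 x) ^ 4) x := by
    intro x
    have d1 : HasDerivAt hss (h1 x) x := (hdiff0 x).hasDerivAt
    have d2 : HasDerivAt h1 (h2 x) x := (hdiff1 x).hasDerivAt
    have d3 : HasDerivAt h2 (-B * hss x * h1 x) x := by
      have := (hdiff2 x).hasDerivAt
      rwa [hh2, hss_ode x] at this
    have A := ((d3.pow 2).mul d2).add
      (((d1.mul (d2.pow 3)).const_mul ((2:ℝ)/3 * B)))
    have hEq : F = fun x => (h2 x) ^ 2 * h1 x + (2/3) * B * (hss x * (h1 x) ^ 3) := by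
      funext y; simp [hF]; ring
    rw [hEq]
    refine A.congr_deriv ?_
    simp only [Pi.pow_apply]
    push_cast
    ring
  -- fundamental theorem of calculus over the period
  have hcont : Continuous fun x => (h2 x) ^ 3 + (2/3) * B * (h1 x) ^ 4 := by
    continuity
  have hFTC : (∫ x in (0:ℝ)..X, ((h2 x) ^ 3 + (2/3) * B * (h1 x) ^ 4)) = F X - F 0 :=
    intervalIntegral.integral_eq_sub_of_hasDerivAt (fun x _ => hFderiv x)
      (hcont.intervalIntegrable 0 X)
  have hFper : F X - F 0 = 0 := by
    have e0 : hss X = hss 0 := by simpa using (hss_per 0)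
    have e1 : h1 X = h1 0 := by simpa using (hp1 0)
    have e2 : h2 X = h2 0 := by simpa using (hp2 0)
    simp [hF, e0, e1, e2]
  have hi2 : IntervalIntegrable (fun x => (h2 x) ^ 3) MeasureTheory.volume 0 X :=
    ((hc2.pow 3)).intervalIntegrable 0 X
  have hi1 : IntervalIntegrable (fun x => (2/3) * B * (h1 x) ^ 4) MeasureTheory.volume 0 X :=
    ((continuous_const.mul (hc1.pow 4))).intervalIntegrable 0 X
  have hsplit : (∫ x in (0:ℝ)..X, (h2 x) ^ 3) + (∫ x in (0:ℝ)..X, (2/3) * B * (h1 x) ^ 4) = 0 := by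
    rw [← intervalIntegral.integral_add hi2 hi1, hFTC, hFper]
  have hconstmul : (∫ x in (0:ℝ)..X, (2/3) * B * (h1 x) ^ 4)
      = (2/3) * B * ∫ x in (0:ℝ)..X, (h1 x) ^ 4 := by
    simpa using intervalIntegral.integral_const_mul ((2:ℝ)/3 * B) (fun x => (h1 x) ^ 4)
  have hkey : (∫ x in (0:ℝ)..X, (h2 x) ^ 3) = -(2/3) * B * ∫ x in (0:ℝ)..X, (h1 x) ^ 4 := by
    rw [hconstmul] at hsplit; linarith
  -- positivity of ∫ h1^4
  have hIpos : 0 < ∫ x in (0:ℝ)..X, (h1 x) ^ 4 := by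
    have hInn : 0 ≤ ∫ x in (0:ℝ)..X, (h1 x) ^ 4 :=
      intervalIntegral.integral_nonneg (le_of_lt hX) (fun x _ => by positivity)
    rcases hInn.lt_or_eq with h | h
    · exact h
    · exfalso
      -- integral is zero ⇒ h1^4 = 0 a.e. on Ioc 0 X ⇒ h1 = 0 on Ioc 0 X
      have hi4 : IntervalIntegrable (fun x => (h1 x) ^ 4) MeasureTheory.volume 0 X :=
        (hc1.pow 4).intervalIntegrable 0 X
      have hzero : (fun x => (h1 x) ^ 4) =ᵐ[MeasureTheory.volume.restrict (Ioc 0 X)] 0 := by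
        refine (intervalIntegral.integral_eq_zero_iff_of_le_of_nonneg_ae (le_of_lt hX) ?_ hi4).mp h.symm
        exact MeasureTheory.ae_of_all _ (fun x => by positivity)
      have hEqOn : EqOn (fun x => (h1 x) ^ 4) 0 (Ioc 0 X) := by
        refine MeasureTheory.Measure.eqOn_of_ae_eq hzero ((hc1.pow 4).continuousOn) continuousOn_const ?_
        rw [interior_Ioc, closure_Ioo (ne_of_lt hX)]
        exact Ioc_subset_Icc_self
      have h1zeroIoc : ∀ x ∈ Ioc (0:ℝ) X, h1 x = 0 := by
        intro x hx
        have := hEqOn hx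
        simpa using pow_eq_zero_iff (n := 4) (by norm_num) |>.mp this
      -- extend to all of ℝ by periodicity
      have h1zero : ∀ x, h1 x = 0 := by
        intro x
        set n : ℤ := ⌈x / X⌉ - 1 with hn
        have hy : h1 x = h1 (x - n * X) := (hp1.sub_int_mul_eq n).symm
        have hmem : x - n * X ∈ Ioc (0:ℝ) X := by
          have hceil1 : ((⌈x / X⌉ : ℝ) - 1) < x / X := by
            linarith [Int.ceil_lt_add_one (x / X)]
          have hceil2 : x / X ≤ (⌈x / X⌉ : ℝ) := Int.le_ceil _
          have hxX : (x / X) * X = x := div_mul_cancel₀ x (ne_of_gt hX)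
          have hlow : ((⌈x / X⌉ : ℝ) - 1) * X < x := by
            have := mul_lt_mul_of_pos_right hceil1 hX
            rwa [hxX] at this
          have hhigh : x ≤ (⌈x / X⌉ : ℝ) * X := by
            have := mul_le_mul_of_nonneg_right hceil2 (le_of_lt hX)
            rwa [hxX] at this
          constructor
          · push_cast [hn]; linarith
          · push_cast [hn]; linarith
        rw [hy]
        exact h1zeroIoc _ hmem
      -- h1 ≡ 0 ⇒ hss constant, contradiction
      obtain ⟨a, b, hab⟩ := hss_nonconst
      exact hab (is_const_of_deriv_eq_zero hdiff0 h1zero a b)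
  constructor
  · rw [hkey]; ring
  · rw [hkey]
    have : (0:ℝ) < (2/3) * B * ∫ x in (0:ℝ)..X, (h1 x) ^ 4 := by positivity
    nlinarith
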